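/- Let R be a symmetric endomorphism of Λ²V. For a 2-form η, let ρ(η) act on p-forms by ρ(η)ω = Σ_{k=1}^q (e_k ⌟ η) ∧ (e_k ⌟ ω) (the derivation extension of the skew-symmetric endomorphism X ↦ X⌟η of V). Then for all p-forms ω, φ and any orthonormal basis {ψ_r} of Λ²V, ⟨ Σ_{i,j=1}^q e_j ∧ (e_i ⌟ ρ(R(e_j∧e_i))ω), φ ⟩ = (1/4) Σ_{r,s} ⟨Rψ_r, ψ_s⟩ ⟨[ψ_r, ω], [ψ_s, φ]⟩; in particular the right-hand side is independent of the chosen orthonormal basis of Λ²V. -/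

import Mathlib

/-!
For a `2`-form `η` the Clifford bracket is twice the derivation `ρ(η)`:
`[η, ω] = 2 ρ(η) ω = 2 Σ_{k,m} ⟨η, e_k ∧ e_m⟩ e_m ∧ (e_k ⌟ ω)`. On `η = e_i ∧ e_j` this follows
from the anticommutation relations of the operators `e_i ∧` and `e_j ⌟`, once right Clifford
multiplication `ω ↦ ω · e_i` is seen to commute with left multiplications; the general case
follows from `η = ½ Σ_{a,b} ⟨η, e_a ∧ e_b⟩ e_a ∧ e_b`.

Hence the right-hand side is `Σ_{r,s} ⟨Rψ_r, ψ_s⟩ ⟨ρ(ψ_r)ω, ρ(ψ_s)φ⟩`. An orthonormal family of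
`(q choose 2)` `2`-forms is complete, `Σ_r ⟨ψ_r, x⟩ ψ_r = x`, so the sums over `r` and `s`
collapse to `Σ_{k,m} ⟨e_m ∧ (e_k ⌟ ω), ρ(R(e_k ∧ e_m))φ⟩`. Since `e_j ∧` and `e_j ⌟` are
adjoint, the left-hand side is the same expression with `ω` and `φ` exchanged, and the
symmetry of `R` makes this expression symmetric in `ω` and `φ`.
-/

open scoped BigOperators

namespace Paper

noncomputable section

/-- Coefficients of exterior forms w.r.t. the fixed orthonormal basis `e₁,…,e_q` of `V = ℝ^q`:
a form is identified with its family of coefficients indexed by subsets of `Fin q`. -/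
abbrev Ext (q : ℕ) := Finset (Fin q) → ℝ

variable {q : ℕ}

/-- `(-1)^{#{j ∈ s | j < i}}` -/
def sgn (i : Fin q) (s : Finset (Fin q)) : ℝ := (-1 : ℝ) ^ (s.filter fun j => j < i).card

/-- Exterior multiplication by the basis vector `e_i`. -/
def wB (i : Fin q) (ω : Ext q) : Ext q := fun s =>
  if i ∈ s then sgn i (s.erase i) * ω (s.erase i) else 0

/-- Interior product (contraction) with the basis vector `e_i`. -/
def iB (i : Fin q) (ω : Ext q) : Ext q := fun s =>
  if i ∈ s then 0 else sgn i s * ω (insert i s)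

/-- The basis monomial `e_{i₁} ∧ ⋯ ∧ e_{i_p}`, for `s = {i₁ < ⋯ < i_p}`. -/
def bF (s : Finset (Fin q)) : Ext q := fun t => if t = s then 1 else 0

/-- The basis vector `e_i` of `V = ℝ^q`. -/
def eB (i : Fin q) : Fin q → ℝ := Pi.single i 1

/-- Exterior multiplication by the vector `X ∈ V`. -/
def wV (X : Fin q → ℝ) (ω : Ext q) : Ext q := ∑ i, X i • wB i ω

/-- Interior product with the vector `X ∈ V`. -/
def iV (X : Fin q → ℝ) (ω : Ext q) : Ext q := ∑ i, X i • iB i ω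

/-- Clifford multiplication `X · ω = X ∧ ω − X ⌟ ω` of a vector with a form. -/
def clV (X : Fin q → ℝ) (ω : Ext q) : Ext q := wV X ω - iV X ω

/-- Clifford multiplication `e_{i₁} · e_{i₂} ⋯ e_{i_p} · ω` for `s = {i₁ < ⋯ < i_p}`. -/
def clB (s : Finset (Fin q)) (ω : Ext q) : Ext q :=
  (Finset.sort s (· ≤ ·)).foldr (fun i τ => clV (eB i) τ) ω

/-- Clifford multiplication of two forms. -/
def clM (ω₁ ω₂ : Ext q) : Ext q := ∑ s : Finset (Fin q), ω₁ s • clB s ω₂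

/-- The bracket `[ω₁, ω₂] = ω₁ · ω₂ − ω₂ · ω₁`. -/
def brkt (ω₁ ω₂ : Ext q) : Ext q := clM ω₁ ω₂ - clM ω₂ ω₁

/-- Exterior multiplication by the monomial `e_{i₁} ∧ ⋯ ∧ e_{i_p}`. -/
def wBs (s : Finset (Fin q)) (ω : Ext q) : Ext q :=
  (Finset.sort s (· ≤ ·)).foldr (fun i τ => wB i τ) ω

/-- The wedge product of two forms. -/
def wM (ω₁ ω₂ : Ext q) : Ext q := ∑ s : Finset (Fin q), ω₁ s • wBs s ω₂

/-- The inner product on forms, for which the basis monomials are orthonormal. -/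
def ip (ω φ : Ext q) : ℝ := ∑ s : Finset (Fin q), ω s * φ s

/-- `ω` is a form of (pure) degree `p`. -/
def homog (p : ℕ) (ω : Ext q) : Prop := ∀ s : Finset (Fin q), s.card ≠ p → ω s = 0

/-- The inner product of two vectors of `V = ℝ^q`. -/
def dotP (X Y : Fin q → ℝ) : ℝ := ∑ i, X i * Y i

/-- A vector of `V` regarded as a 1-form. -/
def oneF (X : Fin q → ℝ) : Ext q := ∑ i, X i • bF {i}

/-- The wedge `X ∧ Y` of two vectors. -/
def w2 (X Y : Fin q → ℝ) : Ext q := wV X (oneF Y)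

/-- Two-element subsets, indexing the canonical orthonormal basis of `Λ²V`. -/
def twoSets (q : ℕ) : Finset (Finset (Fin q)) := Finset.univ.filter fun s => s.card = 2

/-- The Bochner operator quadratic form `⟨B_R^{[p]} ω, φ⟩ =
(1/4) Σ_{r,s} ⟨R ψ_r, ψ_s⟩ ⟨[ψ_r,ω],[ψ_s,φ]⟩`, computed in the canonical
orthonormal basis `{e_i ∧ e_j}_{i<j}` of `Λ²V`. -/
def Bform (R : Ext q →ₗ[ℝ] Ext q) (ω φ : Ext q) : ℝ :=
  (1 / 4 : ℝ) * ∑ s ∈ twoSets q, ∑ t ∈ twoSets q,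
    ip (R (bF s)) (bF t) * ip (brkt (bF s) ω) (brkt (bF t) φ)

open Finset

lemma sum_eq_sum_powerset_erase_add_insert {α M : Type*} [Fintype α] [DecidableEq α]
    [AddCommMonoid M] (i : α) (f : Finset α → M) :
    ∑ s, f s = ∑ t ∈ (univ.erase i).powerset, (f t + f (insert i t)) := by
  rw [sum_add_distrib, ← sum_powerset_insert (notMem_erase i univ), insert_erase (mem_univ i),
    powerset_univ]

lemma sum_comm₄ {M α β : Type*} [AddCommMonoid M] [Fintype α] [Fintype β]
    (f : α → β → α → β → M) :
    ∑ a, ∑ b, ∑ c, ∑ d, f a b c d = ∑ c, ∑ d, ∑ a, ∑ b, f a b c d :=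
  calc ∑ a, ∑ b, ∑ c, ∑ d, f a b c d = ∑ a, ∑ c, ∑ d, ∑ b, f a b c d :=
        sum_congr rfl fun a _ => by rw [sum_comm]; exact sum_congr rfl fun c _ => sum_comm
    _ = ∑ c, ∑ a, ∑ d, ∑ b, f a b c d := sum_comm
    _ = ∑ c, ∑ d, ∑ a, ∑ b, f a b c d := sum_congr rfl fun c _ => sum_comm

lemma sum_eB_smul {M : Type*} [AddCommGroup M] [Module ℝ M] (i : Fin q) (f : Fin q → M) :
    ∑ m, eB i m • f m = f i := by
  simp [eB, Pi.single_apply]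

lemma sgn_mul_self (i : Fin q) (s : Finset (Fin q)) : sgn i s * sgn i s = 1 := by
  rw [sgn, ← pow_add, Even.neg_one_pow (Even.add_self _)]

lemma sgn_insert {i j : Fin q} {s : Finset (Fin q)} (h : j ∉ s) :
    sgn i (insert j s) = (if j < i then -1 else 1) * sgn i s := by
  unfold sgn
  rw [filter_insert]
  split_ifs with hj
  · rw [card_insert_of_notMem (by simp [h]), pow_succ, mul_comm]
  · rw [one_mul]

lemma sgn_erase {i j : Fin q} {s : Finset (Fin q)} (h : j ∈ s) :
    sgn i (s.erase j) = (if j < i then -1 else 1) * sgn i s := by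
  conv_rhs => rw [← insert_erase h, sgn_insert (notMem_erase j s), ← mul_assoc]
  split_ifs <;> norm_num

lemma ip_comm (ω φ : Ext q) : ip ω φ = ip φ ω := dotProduct_comm ω φ

lemma ip_add_left (ω₁ ω₂ φ : Ext q) : ip (ω₁ + ω₂) φ = ip ω₁ φ + ip ω₂ φ := add_dotProduct _ _ _

lemma ip_add_right (ω φ₁ φ₂ : Ext q) : ip ω (φ₁ + φ₂) = ip ω φ₁ + ip ω φ₂ := dotProduct_add _ _ _

lemma ip_neg_right (ω φ : Ext q) : ip ω (-φ) = -ip ω φ := dotProduct_neg _ _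

lemma ip_smul_left (c : ℝ) (ω φ : Ext q) : ip (c • ω) φ = c * ip ω φ := smul_dotProduct _ _ _

lemma ip_smul_right (c : ℝ) (ω φ : Ext q) : ip ω (c • φ) = c * ip ω φ := dotProduct_smul _ _ _

lemma ip_sum_left {ι : Type*} (A : Finset ι) (f : ι → Ext q) (φ : Ext q) :
    ip (∑ x ∈ A, f x) φ = ∑ x ∈ A, ip (f x) φ := sum_dotProduct _ _ _

lemma ip_sum_right {ι : Type*} (A : Finset ι) (f : ι → Ext q) (ω : Ext q) :
    ip ω (∑ x ∈ A, f x) = ∑ x ∈ A, ip ω (f x) := dotProduct_sum _ _ _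

lemma ip_bF (ω : Ext q) (s : Finset (Fin q)) : ip ω (bF s) = ω s := by
  simp [ip, bF]

lemma ip_eq_sum_of_homog {n : ℕ} {a : Ext q} (h : homog n a) (b : Ext q) :
    ip a b = ∑ u : {s : Finset (Fin q) // s.card = n}, a u * b u := by
  have : ∑ u : {s : Finset (Fin q) // s.card ≠ n}, a u * b u = 0 :=
    sum_eq_zero fun u _ => by rw [h u u.2, zero_mul]
  rw [ip, ← Fintype.sum_subtype_add_sum_subtype (fun s : Finset (Fin q) => s.card = n), this,
    add_zero]

def wBₗ (i : Fin q) : Module.End ℝ (Ext q) where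
  toFun := wB i
  map_add' ω φ := by ext s; simp only [wB, Pi.add_apply]; split_ifs <;> ring
  map_smul' c ω := by
    ext s; simp only [wB, Pi.smul_apply, smul_eq_mul, RingHom.id_apply]; split_ifs <;> ring

def iBₗ (i : Fin q) : Module.End ℝ (Ext q) where
  toFun := iB i
  map_add' ω φ := by ext s; simp only [iB, Pi.add_apply]; split_ifs <;> ring
  map_smul' c ω := by
    ext s; simp only [iB, Pi.smul_apply, smul_eq_mul, RingHom.id_apply]; split_ifs <;> ring

lemma wBₗ_apply (i : Fin q) (ω : Ext q) : wBₗ i ω = wB i ω := rfl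

lemma iBₗ_apply (i : Fin q) (ω : Ext q) : iBₗ i ω = iB i ω := rfl

lemma ip_wB (i : Fin q) (ω φ : Ext q) : ip (wB i ω) φ = ip ω (iB i φ) := by
  unfold ip
  rw [sum_eq_sum_powerset_erase_add_insert i, sum_eq_sum_powerset_erase_add_insert i]
  refine sum_congr rfl fun t ht => ?_
  have hi : i ∉ t := fun h => (mem_powerset.1 ht h |> mem_erase.1).1 rfl
  simp only [wB, iB, hi, mem_insert_self, erase_insert hi, ↓reduceIte,
    zero_mul, mul_zero, zero_add, add_zero]
  ring

lemma ip_iB (i : Fin q) (ω φ : Ext q) : ip (iB i ω) φ = ip ω (wB i φ) := by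
  rw [ip_comm, ← ip_wB, ip_comm]

lemma wB_wB_add_wB_wB (i j : Fin q) (ω : Ext q) : wB i (wB j ω) + wB j (wB i ω) = 0 := by
  ext s
  simp only [wB, Pi.add_apply, Pi.zero_apply, mem_erase]
  obtain rfl | hij := eq_or_ne i j
  · simp
  by_cases hi : i ∈ s; swap
  · simp [hi]
  by_cases hj : j ∈ s; swap
  · simp [hj]
  simp only [hi, hj, hij, hij.symm, ne_eq, not_false_eq_true, and_self, ↓reduceIte]
  rw [erase_right_comm]
  simp only [sgn_erase hi, sgn_erase hj, sgn_erase (mem_erase.2 ⟨hij, hi⟩)]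
  rcases hij.lt_or_gt with h | h <;>
    simp only [h, h.not_gt, lt_self_iff_false, ↓reduceIte] <;> ring

lemma wB_iB_add_iB_wB (i j : Fin q) (ω : Ext q) :
    wB i (iB j ω) + iB j (wB i ω) = if i = j then ω else 0 := by
  ext s
  simp only [wB, iB, Pi.add_apply, mem_erase, mem_insert]
  obtain rfl | hij := eq_or_ne i j
  · by_cases hi : i ∈ s <;> simp [hi, ← mul_assoc, sgn_mul_self]
  by_cases hi : i ∈ s; swap
  · simp [hi, hij]
  by_cases hj : j ∈ s
  · simp [hi, hj, hij, hij.symm]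
  simp only [hi, hj, hij, hij.symm, ne_eq, not_false_eq_true, and_false, or_true, ↓reduceIte,
    Pi.zero_apply]
  rw [erase_insert_of_ne hij.symm, sgn_insert (by simp [hj]), sgn_erase hi, sgn_erase hi]
  rcases hij.lt_or_gt with h | h <;>
    simp only [h, h.not_gt, lt_self_iff_false, ↓reduceIte] <;> ring

lemma wB_iB_add_iB_wB_comm (i j : Fin q) (ω : Ext q) :
    wB i (iB j ω) + iB j (wB i ω) = wB j (iB i ω) + iB i (wB j ω) := by
  rw [wB_iB_add_iB_wB, wB_iB_add_iB_wB]
  simp only [eq_comm]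

lemma iB_iB_add_iB_iB (i j : Fin q) (ω : Ext q) : iB i (iB j ω) + iB j (iB i ω) = 0 := by
  ext s
  calc (iB i (iB j ω) + iB j (iB i ω)) s = ip (iB i (iB j ω) + iB j (iB i ω)) (bF s) :=
        (ip_bF _ s).symm
    _ = ip ω (wB j (wB i (bF s)) + wB i (wB j (bF s))) := by
        rw [ip_add_left, ip_add_right, ip_iB, ip_iB, ip_iB, ip_iB]
    _ = 0 := by rw [wB_wB_add_wB_wB, ip_comm]; exact zero_dotProduct ω

lemma homog_bF (s : Finset (Fin q)) : homog s.card (bF s) := by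
  intro t ht
  simp only [bF]
  rw [if_neg (by rintro rfl; exact ht rfl)]

lemma homog_wB {n : ℕ} {ω : Ext q} (h : homog n ω) (i : Fin q) : homog (n + 1) (wB i ω) := by
  intro s hs
  simp only [wB]
  split_ifs with hi
  · have := card_pos.2 ⟨i, hi⟩
    rw [h _ (by rw [card_erase_of_mem hi]; omega), mul_zero]
  · rfl

lemma homog_iB {n : ℕ} {ω : Ext q} (h : homog (n + 1) ω) (i : Fin q) : homog n (iB i ω) := by
  intro s hs
  simp only [iB]
  split_ifs with hi
  · rfl
  · rw [h _ (by rw [card_insert_of_notMem hi]; omega), mul_zero]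

lemma sum_smul_bF (ω : Ext q) : ∑ s, ω s • bF s = ω := by
  ext t
  simp [bF, Finset.sum_apply]

lemma sum_smul_bF_singleton {ξ : Ext q} (h : homog 1 ξ) : ∑ i, ξ {i} • bF {i} = ξ := by
  ext t
  simp only [Finset.sum_apply, Pi.smul_apply, bF, smul_eq_mul, mul_ite, mul_one, mul_zero]
  by_cases ht : t.card = 1
  · obtain ⟨a, rfl⟩ := card_eq_one.1 ht
    simp
  · rw [h t ht, sum_eq_zero]
    rintro i -
    rw [if_neg (by rintro rfl; exact ht (card_singleton i))]

lemma sum_wB_iB {p : ℕ} {ω : Ext q} (h : homog p ω) : ∑ i, wB i (iB i ω) = (p : ℝ) • ω := by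
  ext s
  have hii : ∀ i, wB i (iB i ω) s = if i ∈ s then ω s else 0 := fun i => by
    by_cases hi : i ∈ s <;> simp [wB, iB, hi, ← mul_assoc, sgn_mul_self]
  simp only [Finset.sum_apply, hii, sum_ite_mem, univ_inter, sum_const, nsmul_eq_mul,
    Pi.smul_apply, smul_eq_mul]
  by_cases hs : s.card = p
  · rw [hs]
  · rw [h s hs, mul_zero, mul_zero]

lemma wB_bF {i : Fin q} {t : Finset (Fin q)} (h : i ∉ t) :
    wB i (bF t) = sgn i t • bF (insert i t) := by
  ext s
  simp only [wB, bF, Pi.smul_apply, smul_eq_mul]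
  by_cases hs : s = insert i t
  · simp [hs, h]
  · have : i ∈ s → s.erase i ≠ t := fun hi he => hs (by rw [← he, insert_erase hi])
    split_ifs <;> simp_all

lemma iB_bF {i : Fin q} {t : Finset (Fin q)} (h : i ∉ t) : iB i (bF t) = 0 := by
  ext s
  simp only [iB, bF, Pi.zero_apply]
  split_ifs with _ he
  · rfl
  · exact absurd (he ▸ mem_insert_self i s) h
  · exact mul_zero _

lemma bF_singleton (i : Fin q) : bF {i} = wB i (bF ∅) := by
  rw [wB_bF (notMem_empty i)]
  simp [sgn]

lemma w2_eB (a b : Fin q) : w2 (eB a) (eB b) = wB a (bF {b}) := by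
  rw [w2, oneF, wV, sum_eB_smul, sum_eB_smul]

lemma w2_swap (a b : Fin q) : w2 (eB b) (eB a) = -w2 (eB a) (eB b) := by
  rw [w2_eB, w2_eB, bF_singleton, bF_singleton]
  exact eq_neg_of_add_eq_zero_left (wB_wB_add_wB_wB b a _)

lemma w2_self (a : Fin q) : w2 (eB a) (eB a) = 0 :=
  self_eq_neg.mp (w2_swap a a)

lemma w2_of_lt {a b : Fin q} (h : a < b) : w2 (eB a) (eB b) = bF {a, b} := by
  rw [w2_eB, wB_bF (by simpa using h.ne)]
  simp [sgn, filter_singleton, h.not_gt]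

lemma homog_w2 (a b : Fin q) : homog 2 (w2 (eB a) (eB b)) := by
  rw [w2_eB]
  exact homog_wB (homog_bF {b}) a

lemma ip_w2 (η : Ext q) (a b : Fin q) : ip η (w2 (eB a) (eB b)) = iB a η {b} := by
  rw [w2_eB, ip_comm, ip_wB, ip_comm, ip_bF]

def involute : Module.End ℝ (Ext q) where
  toFun ω s := (-1) ^ s.card * ω s
  map_add' ω φ := by ext s; simp only [Pi.add_apply]; ring
  map_smul' c ω := by ext s; simp only [Pi.smul_apply, smul_eq_mul, RingHom.id_apply]; ring

lemma involute_apply (ω : Ext q) (s : Finset (Fin q)) : involute ω s = (-1) ^ s.card * ω s := rfl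

lemma involute_involute (ω : Ext q) : involute (involute ω) = ω := by
  ext s
  rw [involute_apply, involute_apply, ← mul_assoc, ← pow_add, Even.neg_one_pow (Even.add_self _),
    one_mul]

lemma involute_wB (i : Fin q) (ω : Ext q) : involute (wB i ω) = -wB i (involute ω) := by
  ext s
  simp only [involute_apply, wB, Pi.neg_apply]
  split_ifs with h
  · rw [← card_erase_add_one h, pow_succ]; ring
  · simp

lemma involute_iB (i : Fin q) (ω : Ext q) : involute (iB i ω) = -iB i (involute ω) := by
  ext s
  simp only [involute_apply, iB, Pi.neg_apply]
  split_ifs with h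
  · simp
  · rw [card_insert_of_notMem h, pow_succ]; ring

/-- Right Clifford multiplication `ω ↦ ω · e_i = (-1)^p (e_i ∧ ω + e_i ⌟ ω)` on `p`-forms. -/
def clVr (i : Fin q) : Module.End ℝ (Ext q) := (wBₗ i + iBₗ i) * involute

lemma clVr_apply (i : Fin q) (ω : Ext q) :
    clVr i ω = wB i (involute ω) + iB i (involute ω) := rfl

lemma commute_clVr (i j : Fin q) : Commute (wBₗ j - iBₗ j) (clVr i) := by
  refine LinearMap.ext fun ω => ?_
  simp only [Module.End.mul_apply, LinearMap.sub_apply, wBₗ_apply, iBₗ_apply, clVr_apply,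
    map_sub, involute_wB, involute_iB]
  simp only [← wBₗ_apply, ← iBₗ_apply, map_add, map_neg]
  simp only [wBₗ_apply, iBₗ_apply]
  linear_combination wB_wB_add_wB_wB j i (involute ω) - iB_iB_add_iB_iB j i (involute ω)
    + wB_iB_add_iB_wB_comm j i (involute ω)

lemma clVr_bF {i : Fin q} {t : Finset (Fin q)} (h : i ∉ t) :
    clVr i (bF t) = ((-1) ^ t.card * sgn i t) • bF (insert i t) := by
  have : involute (bF t) = (-1 : ℝ) ^ t.card • bF t := by
    ext s
    by_cases hs : s = t <;> simp [involute_apply, bF, hs]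
  rw [clVr_apply, this, ← wBₗ_apply, ← iBₗ_apply, map_smul, map_smul, wBₗ_apply, iBₗ_apply,
    wB_bF h, iB_bF h, smul_zero, add_zero, smul_smul]

lemma clVr_clVr_bF_empty {i j : Fin q} (h : i < j) : clVr j (clVr i (bF ∅)) = bF {i, j} := by
  have hsgn : sgn j {i} = -1 := by rw [sgn, filter_singleton, if_pos h]; simp
  have hi : clVr i (bF ∅) = bF {i} := by simp [clVr_bF (notMem_empty i), sgn]
  rw [hi, clVr_bF (by simpa using h.ne'), hsgn, pair_comm]
  simp

lemma clV_eB (i : Fin q) (ω : Ext q) : clV (eB i) ω = wB i ω - iB i ω := by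
  rw [clV, wV, iV, sum_eB_smul, sum_eB_smul]

def clBₗ (s : Finset (Fin q)) : Module.End ℝ (Ext q) :=
  ((s.sort (· ≤ ·)).map fun i => wBₗ i - iBₗ i).prod

lemma clB_eq_clBₗ (s : Finset (Fin q)) (ω : Ext q) : clB s ω = clBₗ s ω := by
  rw [clB, clBₗ]
  induction s.sort (· ≤ ·) with
  | nil => rfl
  | cons a l ih => rw [List.foldr_cons, ih, clV_eB]; rfl

lemma clB_clVr (s : Finset (Fin q)) (i : Fin q) (ω : Ext q) :
    clB s (clVr i ω) = clVr i (clB s ω) := by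
  have : Commute (clBₗ s) (clVr i) := Commute.list_prod_left _ _ <| by
    simp only [List.mem_map]
    rintro _ ⟨j, -, rfl⟩
    exact commute_clVr i j
  rw [clB_eq_clBₗ, clB_eq_clBₗ, ← Module.End.mul_apply, this.eq, Module.End.mul_apply]

lemma clB_bF_empty (s : Finset (Fin q)) : clB s (bF ∅) = bF s := by
  suffices ∀ l : List (Fin q), l.Pairwise (· < ·) →
      l.foldr (fun i τ => clV (eB i) τ) (bF ∅) = bF l.toFinset by
    rw [clB, this _ (sortedLT_sort s).pairwise, sort_toFinset]
  intro l hl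
  induction l with
  | nil => rfl
  | cons a l ih =>
    rw [List.pairwise_cons] at hl
    have ha : a ∉ l.toFinset := fun h => lt_irrefl a (hl.1 a (List.mem_toFinset.1 h))
    -- `a` precedes every element of `l`, so `e_a ∧` acts without sign
    have hsgn : sgn a l.toFinset = 1 := by
      rw [sgn, filter_eq_empty_iff.2 fun b hb => (hl.1 b (List.mem_toFinset.1 hb)).not_gt]
      simp
    rw [List.foldr_cons, ih hl.2, clV_eB, wB_bF ha, iB_bF ha, hsgn, one_smul, sub_zero,
      List.toFinset_cons]

lemma clB_pair {i j : Fin q} (h : i < j) (ω : Ext q) :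
    clB {i, j} ω = clV (eB i) (clV (eB j) ω) := by
  have : ({i, j} : Finset (Fin q)).sort (· ≤ ·) = [i, j] := by
    rw [sort_insert _ (by simpa using h.le) (by simpa using h.ne), sort_singleton]
  rw [clB, this]
  rfl

lemma clM_bF_left (u : Finset (Fin q)) (ω : Ext q) : clM (bF u) ω = clB u ω := by
  simp [clM, bF]

lemma clM_bF_empty_right (ω : Ext q) : clM ω (bF ∅) = ω := by
  simp only [clM, clB_bF_empty, sum_smul_bF]

lemma clM_clVr (ω : Ext q) (i : Fin q) (τ : Ext q) : clM ω (clVr i τ) = clVr i (clM ω τ) := by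
  simp only [clM, clB_clVr, map_sum, map_smul]

lemma brkt_bF_pair {i j : Fin q} (h : i < j) (ω : Ext q) :
    brkt (bF {i, j}) ω = (2 : ℝ) • (wB j (iB i ω) - wB i (iB j ω)) := by
  rw [brkt, clM_bF_left, clB_pair h, ← clVr_clVr_bF_empty h, clM_clVr, clM_clVr,
    clM_bF_empty_right, clV_eB, clV_eB, clVr_apply, clVr_apply, map_add, involute_wB,
    involute_iB, involute_involute]
  simp only [← wBₗ_apply, ← iBₗ_apply, map_add, map_sub, map_neg]
  simp only [wBₗ_apply, iBₗ_apply]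
  have hij := wB_iB_add_iB_wB i j ω
  have hji := wB_iB_add_iB_wB j i ω
  rw [if_neg h.ne] at hij
  rw [if_neg h.ne'] at hji
  rw [two_smul]
  linear_combination wB_wB_add_wB_wB i j ω + iB_iB_add_iB_iB i j ω + hij - hji

def brktₗ (ω : Ext q) : Ext q →ₗ[ℝ] Ext q where
  toFun η := brkt η ω
  map_add' x y := by
    simp only [brkt, clM, clB_eq_clBₗ, map_add, Pi.add_apply, add_smul, smul_add,
      sum_add_distrib]
    abel
  map_smul' c x := by
    simp only [brkt, clM, clB_eq_clBₗ, map_smul, Pi.smul_apply, smul_eq_mul, mul_smul,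
      smul_comm _ c, ← smul_sum, RingHom.id_apply, smul_sub]

lemma brktₗ_apply (η ω : Ext q) : brktₗ ω η = brkt η ω := rfl

lemma brkt_w2 (a b : Fin q) (ω : Ext q) :
    brkt (w2 (eB a) (eB b)) ω = (2 : ℝ) • (wB b (iB a ω) - wB a (iB b ω)) := by
  rcases lt_trichotomy a b with h | rfl | h
  · rw [w2_of_lt h, brkt_bF_pair h]
  · rw [w2_self, ← brktₗ_apply, map_zero, sub_self, smul_zero]
  · rw [w2_swap, w2_of_lt h, ← brktₗ_apply, map_neg, brktₗ_apply, brkt_bF_pair h, ← smul_neg,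
      neg_sub]

lemma sum_sum_ip_w2_smul_w2 {η : Ext q} (h : homog 2 η) :
    ∑ a, ∑ b, ip η (w2 (eB a) (eB b)) • w2 (eB a) (eB b) = (2 : ℝ) • η := by
  calc ∑ a, ∑ b, ip η (w2 (eB a) (eB b)) • w2 (eB a) (eB b)
      = ∑ a, wB a (∑ b, iB a η {b} • bF {b}) := by
        simp only [ip_w2]
        simp only [w2_eB, ← wBₗ_apply, map_sum, map_smul]
    _ = (2 : ℝ) • η := by
        simp only [sum_smul_bF_singleton (homog_iB h _), sum_wB_iB h, Nat.cast_ofNat]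

lemma brkt_eq_two_smul_sum {η : Ext q} (h : homog 2 η) (ω : Ext q) :
    brkt η ω = (2 : ℝ) • ∑ a, ∑ b, ip η (w2 (eB a) (eB b)) • wB b (iB a ω) := by
  -- the coefficients `⟨η, e_a ∧ e_b⟩` are antisymmetric in `(a, b)`
  have hswap : ∑ a, ∑ b, ip η (w2 (eB a) (eB b)) • wB a (iB b ω)
      = -∑ a, ∑ b, ip η (w2 (eB a) (eB b)) • wB b (iB a ω) := by
    rw [sum_comm, ← sum_neg_distrib]
    refine sum_congr rfl fun a _ => ?_
    rw [← sum_neg_distrib]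
    refine sum_congr rfl fun b _ => ?_
    rw [w2_swap a b, ip_neg_right, neg_smul]
  calc brkt η ω
      = brktₗ ω ((1 / 2 : ℝ) • ∑ a, ∑ b, ip η (w2 (eB a) (eB b)) • w2 (eB a) (eB b)) := by
        rw [sum_sum_ip_w2_smul_w2 h, smul_smul]; norm_num; rfl
    _ = ∑ a, ∑ b, ip η (w2 (eB a) (eB b)) • (wB b (iB a ω) - wB a (iB b ω)) := by
        simp only [map_smul, map_sum, brktₗ_apply, brkt_w2, smul_sum, smul_smul]
        refine sum_congr rfl fun a _ => sum_congr rfl fun b _ => ?_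
        ring_nf
    _ = (2 : ℝ) • ∑ a, ∑ b, ip η (w2 (eB a) (eB b)) • wB b (iB a ω) := by
        simp only [smul_sub, sum_sub_distrib, hswap, sub_neg_eq_add, two_smul]

def wMₗ (τ : Ext q) : Ext q →ₗ[ℝ] Ext q where
  toFun ξ := wM ξ τ
  map_add' x y := by simp only [wM, Pi.add_apply, add_smul, sum_add_distrib]
  map_smul' c x := by
    simp only [wM, Pi.smul_apply, smul_eq_mul, mul_smul, ← smul_sum, RingHom.id_apply]

lemma wMₗ_apply (ξ τ : Ext q) : wMₗ τ ξ = wM ξ τ := rfl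

lemma wM_of_homog_one {ξ : Ext q} (h : homog 1 ξ) (τ : Ext q) :
    wM ξ τ = ∑ m, ξ {m} • wB m τ := by
  conv_lhs => rw [← sum_smul_bF_singleton h, ← wMₗ_apply]
  simp [wMₗ_apply, wM, bF, wBs]

def rho (η ω : Ext q) : Ext q := ∑ k, wM (iB k η) (iB k ω)

lemma rho_eq_sum {η : Ext q} (h : homog 2 η) (ω : Ext q) :
    rho η ω = ∑ k, ∑ m, ip η (w2 (eB k) (eB m)) • wB m (iB k ω) := by
  simp only [rho, wM_of_homog_one (homog_iB h _), ip_w2]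

lemma brkt_eq_two_smul_rho {η : Ext q} (h : homog 2 η) (ω : Ext q) :
    brkt η ω = (2 : ℝ) • rho η ω := by
  rw [brkt_eq_two_smul_sum h, rho_eq_sum h]

def rhoₗ (ω : Ext q) : Ext q →ₗ[ℝ] Ext q where
  toFun η := rho η ω
  map_add' x y := by simp only [rho, ← iBₗ_apply, ← wMₗ_apply, map_add, sum_add_distrib]
  map_smul' c x := by
    simp only [rho, ← iBₗ_apply, ← wMₗ_apply, map_smul, ← smul_sum, RingHom.id_apply]

lemma rhoₗ_apply (η ω : Ext q) : rhoₗ ω η = rho η ω := rfl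

section Orthonormal

variable {n : ℕ} (ψ : Fin (q.choose n) → Ext q) (hψ : ∀ r, homog n (ψ r))
  (hon : ∀ r s, ip (ψ r) (ψ s) = if r = s then 1 else 0)
include hψ hon

/- The coefficient matrix of `ψ` is square with orthonormal rows, so its columns are
orthonormal too. -/
lemma sum_ip_smul_of_orthonormal {x : Ext q} (hx : homog n x) : ∑ r, ip (ψ r) x • ψ r = x := by
  let M : Matrix (Fin (q.choose n)) {s : Finset (Fin q) // s.card = n} ℝ :=
    Matrix.of fun r u => ψ r u
  have hM : M * M.transpose = 1 := by
    ext r s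
    simp [Matrix.mul_apply, M, ← ip_eq_sum_of_homog (hψ r), hon, Matrix.one_apply]
  have hMt : M.transpose * M = 1 :=
    (Matrix.mul_eq_one_comm_of_equiv
      (Fintype.equivOfCardEq (by simp [Fintype.card_finset_len]))).1 hM
  ext t
  by_cases ht : t.card = n
  · have := congr_fun
      (Matrix.mulVec_mulVec (fun u : {s : Finset (Fin q) // s.card = n} => x u) M.transpose M)
      ⟨t, ht⟩
    rw [hMt, Matrix.one_mulVec] at this
    simpa [Matrix.mulVec, dotProduct, M, ← ip_eq_sum_of_homog (hψ _), Finset.sum_apply, mul_comm]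
      using this
  · simp [Finset.sum_apply, hψ _ t ht, hx t ht]

lemma sum_ip_mul_ip_map_of_orthonormal (L : Ext q →ₗ[ℝ] Ext q) (A : Ext q) {x : Ext q}
    (hx : homog n x) : ∑ r, ip (ψ r) x * ip A (L (ψ r)) = ip A (L x) := by
  conv_rhs => rw [← sum_ip_smul_of_orthonormal ψ hψ hon hx]
  simp only [map_sum, map_smul, ip_sum_right, ip_smul_right]

end Orthonormal

lemma sum_sum_ip_mul_ip_brkt (R : Ext q →ₗ[ℝ] Ext q)
    (hR2 : ∀ η : Ext q, homog 2 η → homog 2 (R η)) (ω φ : Ext q)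
    (ψ : Fin (q.choose 2) → Ext q) (hψ : ∀ r, homog 2 (ψ r))
    (hon : ∀ r s, ip (ψ r) (ψ s) = if r = s then 1 else 0) :
    (1 / 4 : ℝ) * ∑ r, ∑ s, ip (R (ψ r)) (ψ s) * ip (brkt (ψ r) ω) (brkt (ψ s) φ)
      = ∑ k, ∑ m, ip (wB m (iB k ω)) (rho (R (w2 (eB k) (eB m))) φ) :=
  calc (1 / 4 : ℝ) * ∑ r, ∑ s, ip (R (ψ r)) (ψ s) * ip (brkt (ψ r) ω) (brkt (ψ s) φ)
      = ∑ r, ∑ s, ip (ψ s) (R (ψ r)) * ip (rho (ψ r) ω) (rhoₗ φ (ψ s)) := by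
        simp only [brkt_eq_two_smul_rho (hψ _), ip_smul_left, ip_smul_right, mul_sum,
          rhoₗ_apply, ip_comm (R _)]
        refine sum_congr rfl fun r _ => sum_congr rfl fun s _ => ?_
        ring
    _ = ∑ r, ip (rho (ψ r) ω) (rhoₗ φ (R (ψ r))) :=
        sum_congr rfl fun r _ =>
          sum_ip_mul_ip_map_of_orthonormal ψ hψ hon _ _ (hR2 _ (hψ r))
    _ = ∑ k, ∑ m, ∑ r, ip (ψ r) (w2 (eB k) (eB m)) *
          ip (wB m (iB k ω)) ((rhoₗ φ ∘ₗ R) (ψ r)) := by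
        simp only [rho_eq_sum (hψ _), ip_sum_left, ip_smul_left, LinearMap.comp_apply]
        rw [sum_comm]
        exact sum_congr rfl fun k _ => sum_comm
    _ = ∑ k, ∑ m, ip (wB m (iB k ω)) (rho (R (w2 (eB k) (eB m))) φ) :=
        sum_congr rfl fun k _ => sum_congr rfl fun m _ =>
          sum_ip_mul_ip_map_of_orthonormal ψ hψ hon _ _ (homog_w2 k m)

lemma sum_sum_ip_rho_wB_iB_comm (R : Ext q →ₗ[ℝ] Ext q)
    (hR2 : ∀ η : Ext q, homog 2 η → homog 2 (R η))
    (hsym : ∀ a b : Ext q, homog 2 a → homog 2 b → ip (R a) b = ip a (R b)) (ω φ : Ext q) :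
    ∑ j, ∑ i, ip (rho (R (w2 (eB j) (eB i))) ω) (wB i (iB j φ))
      = ∑ k, ∑ m, ip (wB m (iB k ω)) (rho (R (w2 (eB k) (eB m))) φ) := by
  simp only [rho_eq_sum (hR2 _ (homog_w2 _ _)), ip_sum_left, ip_sum_right, ip_smul_left,
    ip_smul_right]
  rw [sum_comm₄]
  refine sum_congr rfl fun k _ => sum_congr rfl fun m _ =>
    sum_congr rfl fun j _ => sum_congr rfl fun i _ => ?_
  rw [hsym _ _ (homog_w2 j i) (homog_w2 k m), ip_comm (w2 _ _)]

theorem statement_3_general {q : ℕ} (R : Ext q →ₗ[ℝ] Ext q)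
    (hR2 : ∀ η : Ext q, homog 2 η → homog 2 (R η))
    (hsym : ∀ a b : Ext q, homog 2 a → homog 2 b → ip (R a) b = ip a (R b))
    (ω φ : Ext q)
    (ψ : Fin (Nat.choose q 2) → Ext q)
    (hψ : ∀ r, homog 2 (ψ r))
    (hon : ∀ r s, ip (ψ r) (ψ s) = if r = s then 1 else 0) :
    ip (∑ j : Fin q, ∑ i : Fin q,
        wB j (iB i (∑ k : Fin q, wM (iB k (R (w2 (eB j) (eB i)))) (iB k ω)))) φ
      = (1 / 4 : ℝ) * ∑ r, ∑ s,
          ip (R (ψ r)) (ψ s) * ip (brkt (ψ r) ω) (brkt (ψ s) φ) := by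
  change ip (∑ j, ∑ i, wB j (iB i (rho (R (w2 (eB j) (eB i))) ω))) φ = _
  rw [sum_sum_ip_mul_ip_brkt R hR2 ω φ ψ hψ hon, ← sum_sum_ip_rho_wB_iB_comm R hR2 hsym]
  simp only [ip_sum_left, ip_wB, ip_iB]

/-- Equation (3.4) of the paper. For a symmetric endomorphism `R` of
`Λ²V`, letting `ρ(η)ω = Σ_k (e_k ⌟ η) ∧ (e_k ⌟ ω)`, one has, for all `p`-forms `ω, φ`
and any orthonormal basis `{ψ_r}` of `Λ²V`,
`⟨Σ_{i,j} e_j ∧ (e_i ⌟ ρ(R(e_j∧e_i))ω), φ⟩ = (1/4) Σ_{r,s} ⟨Rψ_r,ψ_s⟩⟨[ψ_r,ω],[ψ_s,φ]⟩`;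
in particular the right-hand side does not depend on the chosen orthonormal basis. -/
theorem statement_3 {q p : ℕ} (hq : 1 ≤ q) (R : Ext q →ₗ[ℝ] Ext q)
    (hR2 : ∀ η : Ext q, homog 2 η → homog 2 (R η))
    (hsym : ∀ a b : Ext q, homog 2 a → homog 2 b → ip (R a) b = ip a (R b))
    (ω φ : Ext q) (hω : homog p ω) (hφ : homog p φ)
    (ψ : Fin (Nat.choose q 2) → Ext q)
    (hψ : ∀ r, homog 2 (ψ r))
    (hon : ∀ r s, ip (ψ r) (ψ s) = if r = s then 1 else 0) :
    ip (∑ j : Fin q, ∑ i : Fin q,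
        wB j (iB i (∑ k : Fin q, wM (iB k (R (w2 (eB j) (eB i)))) (iB k ω)))) φ
      = (1 / 4 : ℝ) * ∑ r, ∑ s,
          ip (R (ψ r)) (ψ s) * ip (brkt (ψ r) ω) (brkt (ψ s) φ) :=
  statement_3_general R hR2 hsym ω φ ψ hψ hon

end

end Paper
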